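/- arXiv:0908.1113 — 4 statements merged into one kernel-verified Lean document; each statement's English description precedes it below -/
import Mathlib

section
/- If 𝒜 is an analytic set of well-founded trees on ℕ, then sup{o(T) : T ∈ 𝒜} < ω₁. -/
/-!
Write `𝒜` as the range of a continuous `f : ℕ^ℕ → Tr`. Pairing a node `s` of `f x` with the first
`|s|` values of `x` embeds every tree `f x` into one tree `W` on `ℕ × ℕ`, and `W` is well-founded:
along an infinite branch of `W`, the trees `f xₙ` witnessing its finite pieces converge to `f x`,
where `x` is the first coordinate of the branch, so its second coordinate is a branch of `f x`.
Since `s ↦ (x, s)` maps proper extensions to proper extensions, a node of `f x` surviving `ξ`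
derivatives has rank at least `ξ` in `W`; as `W` is countable, its ranks are bounded by a single
countable ordinal.
-/

open Ordinal Set

/-- A tree on ℕ: a set of finite sequences closed under taking prefixes. -/
def IsTreeOn (T : Set (List ℕ)) : Prop := ∀ s ∈ T, ∀ t : List ℕ, t <+: s → t ∈ T

/-- A tree has an infinite branch. -/
def HasInfiniteBranch (T : Set (List ℕ)) : Prop :=
  ∃ f : ℕ → ℕ, ∀ n : ℕ, (List.ofFn (fun i : Fin n => f i)) ∈ T

/-- A well-founded tree: no infinite branch. -/
def WellFoundedTree (T : Set (List ℕ)) : Prop := ¬ HasInfiniteBranch T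

/-- Tree derivative: keep the nodes with a proper end-extension in the tree. -/
def treeDeriv (T : Set (List ℕ)) : Set (List ℕ) :=
  {s ∈ T | ∃ t ∈ T, s <+: t ∧ s ≠ t}

/-- Transfinite iterates of the tree derivative. -/
noncomputable def treeDerivIter (T : Set (List ℕ)) (ξ : Ordinal) : Set (List ℕ) :=
  Ordinal.limitRecOn ξ T (fun _ ih => treeDeriv ih)
    (fun o _ ih => ⋂ (o' : Ordinal) (h : o' < o), ih o' h)

/-- The order of a (well-founded) tree: least ξ with T^(ξ) = ∅. -/
noncomputable def treeOrder (T : Set (List ℕ)) : Ordinal :=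
  sInf {ξ | treeDerivIter T ξ = ∅}

/-- A < B for finite subsets of ℕ: every element of A is below every element of B. -/
def FinsetLt (A B : Finset ℕ) : Prop := ∀ a ∈ A, ∀ b ∈ B, a < b

/-- The recursive description of a system of Schreier families `S ξ`, with
(for each limit ordinal) some fixed increasing cofinal sequence used. -/
structure IsSchreierFamily (S : Ordinal → Set (Finset ℕ)) : Prop where
  zero : S 0 = {F | (∃ n : ℕ, F = {n}) ∨ F = ∅}
  succ : ∀ ζ : Ordinal, S (ζ + 1) =
    {F | F = ∅ ∨ ∃ (n : ℕ) (hn : 1 ≤ n) (G : Fin n → Finset ℕ),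
      (∀ i, G i ∈ S ζ) ∧ (∀ i j : Fin n, i < j → FinsetLt (G i) (G j)) ∧
      (∀ a ∈ G ⟨0, hn⟩, n ≤ a) ∧ F = Finset.univ.biUnion G}
  limit : ∀ ξ : Ordinal, Order.IsSuccLimit ξ → ∃ f : ℕ → Ordinal, StrictMono f ∧
    (∀ n, f n < ξ) ∧ (⨆ n, f n) = ξ ∧
    S ξ = ⋃ n : ℕ, {F ∈ S (f n) | ∀ a ∈ F, n ≤ a}

/-- The tree associated to a family of finite subsets of ℕ: finite subsets are
identified with the lists enumerating them in increasing order. -/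
def schreierTree (A : Set (Finset ℕ)) : Set (List ℕ) :=
  {l | l.Pairwise (· < ·) ∧ l.toFinset ∈ A}

section Banach

variable {X Y : Type*} [NormedAddCommGroup X] [NormedSpace ℝ X]
  [NormedAddCommGroup Y] [NormedSpace ℝ Y]

/-- A strictly singular operator: bounded below on no infinite-dimensional
closed subspace (equivalently, an isomorphism on no such subspace). -/
def StrictlySingular (T : X →L[ℝ] Y) : Prop :=
  ∀ Z : Submodule ℝ X, IsClosed (Z : Set X) → ¬ FiniteDimensional ℝ Z →
    ¬ ∃ c > 0, ∀ z ∈ Z, c * ‖z‖ ≤ ‖T z‖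

/-- A basic sequence, via the basis-constant inequality. -/
def IsBasicSeq (x : ℕ → X) : Prop :=
  ∃ K : ℝ, ∀ (m n : ℕ), m ≤ n → ∀ a : ℕ → ℝ,
    ‖∑ i ∈ Finset.range m, a i • x i‖ ≤ K * ‖∑ i ∈ Finset.range n, a i • x i‖

/-- A normalized basic sequence. -/
def NormalizedBasicSeq (x : ℕ → X) : Prop := (∀ n, ‖x n‖ = 1) ∧ IsBasicSeq x

/-- `𝒜`-strictly singular operators, for a family `𝒜` of finite subsets of ℕ. -/
def ASS (𝒜 : Set (Finset ℕ)) (T : X →L[ℝ] Y) : Prop :=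
  ∀ ε > (0:ℝ), ∀ x : ℕ → X, NormalizedBasicSeq x →
    ∃ F ∈ 𝒜, ∃ v ∈ Submodule.span ℝ (x '' (F : Set ℕ)), v ≠ 0 ∧ ‖T v‖ < ε * ‖v‖

/-- `‖T|_Z‖ < ε`. -/
def RestrictNormLt (T : X →L[ℝ] Y) (Z : Submodule ℝ X) (ε : ℝ) : Prop :=
  ∃ c, 0 ≤ c ∧ c < ε ∧ ∀ z ∈ Z, ‖T z‖ ≤ c * ‖z‖

/-- Hereditarily indecomposable space. -/
def HereditarilyIndecomposable (X : Type*) [NormedAddCommGroup X] [NormedSpace ℝ X] : Prop :=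
  ∀ W Z : Submodule ℝ X, IsClosed (W : Set X) → IsClosed (Z : Set X) →
    ¬ FiniteDimensional ℝ W → ¬ FiniteDimensional ℝ Z → ∀ ε > (0:ℝ),
    ∃ w ∈ W, ∃ z ∈ Z, ‖w‖ = 1 ∧ ‖z‖ = 1 ∧ ‖w - z‖ < ε

/-- A space with few operators: every operator is λI + S with S strictly singular. -/
def FewOperators (X : Type*) [NormedAddCommGroup X] [NormedSpace ℝ X] : Prop :=
  ∀ T : X →L[ℝ] X, ∃ (lam : ℝ) (S : X →L[ℝ] X), StrictlySingular S ∧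
    T = lam • ContinuousLinearMap.id ℝ X + S

/-- The rational linear combination of `x ∘ l` with coefficients `a`. -/
def ratComb (x : ℕ → X) (l : List ℕ) (a : ℕ → ℚ) : X :=
  ∑ i ∈ Finset.range l.length, (a i : ℝ) • x (l.getD i 0)

/-- The tree `T(R, m, (x_n))` of sequences of indices on which `R` is
`(1/m)`-bounded below over rational coefficients. -/
def opTree (R : X →L[ℝ] Y) (m : ℕ) (x : ℕ → X) : Set (List ℕ) :=
  {l | ∀ a : ℕ → ℚ, (1 / (m : ℝ)) * ‖ratComb x l a‖ ≤ ‖R (ratComb x l a)‖}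

end Banach

/-- The unit ball of L(X,Y). -/
def SOTBall (X Y : Type*) [NormedAddCommGroup X] [NormedSpace ℝ X]
    [NormedAddCommGroup Y] [NormedSpace ℝ Y] : Type _ := {T : X →L[ℝ] Y // ‖T‖ ≤ 1}

/-- The strong operator topology on the unit ball of L(X,Y). -/
instance SOTBall.topologicalSpace (X Y : Type*) [NormedAddCommGroup X] [NormedSpace ℝ X]
    [NormedAddCommGroup Y] [NormedSpace ℝ Y] : TopologicalSpace (SOTBall X Y) :=
  TopologicalSpace.induced (fun T => (T.1 : X → Y)) Pi.topologicalSpace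
def SOTBall.op {X Y : Type*} [NormedAddCommGroup X] [NormedSpace ℝ X]
    [NormedAddCommGroup Y] [NormedSpace ℝ Y] (T : SOTBall X Y) : X →L[ℝ] Y :=
  Subtype.val T

/-- Normalized sequences with basis constant at most `k`. -/
def basisConstSet (X : Type*) [NormedAddCommGroup X] [NormedSpace ℝ X] (k : ℝ) :
    Set (ℕ → X) :=
  {x | (∀ n, ‖x n‖ = 1) ∧ ∀ m n : ℕ, m ≤ n → ∀ a : ℕ → ℝ,
    ‖∑ i ∈ Finset.range m, a i • x i‖ ≤ k * ‖∑ i ∈ Finset.range n, a i • x i‖}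

open Classical in
/-- The tree `T(R,m,(x_n))` coded as an element of `2^{ℕ^{<ℕ}}`. -/
noncomputable def phiTree {X Y : Type*} [NormedAddCommGroup X] [NormedSpace ℝ X]
    [NormedAddCommGroup Y] [NormedSpace ℝ Y] (m : ℕ) (R : X →L[ℝ] Y) (x : ℕ → X) :
    List ℕ → Bool :=
  fun l => if l ∈ opTree R m x then true else false

section Theorems

open MeasureTheory TopologicalSpace

universe u v

section TreeDerivIter

variable (T : Set (List ℕ))

theorem treeDerivIter_zero : treeDerivIter T 0 = T :=
  Ordinal.limitRecOn_zero _ _ _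

theorem treeDerivIter_add_one (ξ : Ordinal) :
    treeDerivIter T (ξ + 1) = treeDeriv (treeDerivIter T ξ) :=
  Ordinal.limitRecOn_add_one _ _ _ _

theorem treeDerivIter_limit {ξ : Ordinal} (hξ : Order.IsSuccLimit ξ) :
    treeDerivIter T ξ = ⋂ (ζ : Ordinal) (_ : ζ < ξ), treeDerivIter T ζ :=
  Ordinal.limitRecOn_limit _ _ _ _ hξ

theorem treeDerivIter_subset (ξ : Ordinal) : treeDerivIter T ξ ⊆ T := by
  induction ξ using Ordinal.limitRecOn with
  | zero => rw [treeDerivIter_zero]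
  | add_one ζ ih => exact fun s hs => ih ((treeDerivIter_add_one T ζ).subset hs).1
  | limit ξ hξ _ =>
    intro s hs
    rw [treeDerivIter_limit T hξ, mem_iInter₂] at hs
    simpa only [treeDerivIter_zero] using hs 0 hξ.bot_lt

end TreeDerivIter

section ProperExtension

variable {α : Type*}

def ExtendsIn (W : Set (List α)) (t s : List α) : Prop := t ∈ W ∧ s <+: t ∧ s ≠ t

theorem exists_ofFn_prefix_of_strictChain {l : ℕ → List α}
    (hl : ∀ n, l n <+: l (n + 1) ∧ l n ≠ l (n + 1)) :
    ∃ g : ℕ → α, ∀ n, List.ofFn (fun i : Fin n => g i) <+: l n := by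
  have hlen : ∀ n, n ≤ (l n).length := by
    intro n
    induction n with
    | zero => exact Nat.zero_le _
    | succ n ih =>
      have hle := (hl n).1.length_le
      have hne : (l n).length ≠ (l (n + 1)).length :=
        fun h => (hl n).2 ((hl n).1.eq_of_length_le h.ge)
      omega
  have hmono : ∀ m n, m ≤ n → l m <+: l n := fun m n hmn => by
    induction n, hmn using Nat.le_induction with
    | base => exact List.prefix_refl _
    | succ n _ ih => exact ih.trans (hl n).1
  refine ⟨fun i => (l (i + 1))[i]'(hlen (i + 1)), fun n => ?_⟩
  refine List.prefix_iff_getElem.2 ⟨by simpa using hlen n, fun i hi => ?_⟩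
  rw [List.length_ofFn] at hi
  simpa using (hmono (i + 1) n hi).getElem (hlen (i + 1))

theorem wellFounded_extendsIn {W : Set (List α)} (hW : ∀ t ∈ W, ∀ s, s <+: t → s ∈ W)
    (hbranch : ∀ g : ℕ → α, ∃ n, List.ofFn (fun i : Fin n => g i) ∉ W) :
    WellFounded (ExtendsIn W) := by
  refine wellFounded_iff_isEmpty_descending_chain.2 ⟨fun ⟨l, hl⟩ => ?_⟩
  obtain ⟨g, hg⟩ := exists_ofFn_prefix_of_strictChain fun n => (hl n).2
  obtain ⟨n, hn⟩ := hbranch g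
  exact hn (hW _ (hl n).1 _ ((hg n).trans (hl n).2.1))

end ProperExtension

section Rank

variable {α : Type v} {r : α → α → Prop} [IsWellFounded α r]

theorem le_lift_rank_of_mem_treeDerivIter {T : Set (List ℕ)} (φ : List ℕ → α)
    (hφ : ∀ s t, ExtendsIn T t s → r (φ t) (φ s)) (ξ : Ordinal.{max v u}) :
    ∀ s ∈ treeDerivIter T ξ, ξ ≤ Ordinal.lift.{u} (IsWellFounded.rank r (φ s)) := by
  induction ξ using Ordinal.limitRecOn with
  | zero => exact fun _ _ => zero_le
  | add_one ζ ih =>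
    intro s hs
    rw [treeDerivIter_add_one] at hs
    obtain ⟨-, t, htζ, hst, hne⟩ := hs
    have hrel := hφ s t ⟨treeDerivIter_subset T ζ htζ, hst, hne⟩
    exact Order.add_one_le_of_lt ((ih t htζ).trans_lt
      (Ordinal.lift_lt.2 (IsWellFounded.rank_lt_of_rel hrel)))
  | limit ξ hξ ih =>
    intro s hs
    rw [treeDerivIter_limit T hξ, mem_iInter₂] at hs
    by_contra! hlt
    have hsucc := hξ.succ_lt hlt
    exact (Order.lt_succ _).not_ge (ih _ hsucc s (hs _ hsucc))

theorem treeOrder_le_of_lift_rank_lt {T : Set (List ℕ)} (φ : List ℕ → α)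
    (hφ : ∀ s t, ExtendsIn T t s → r (φ t) (φ s)) {Λ : Ordinal.{max v u}}
    (hΛ : ∀ s ∈ T, Ordinal.lift.{u} (IsWellFounded.rank r (φ s)) < Λ) : treeOrder T ≤ Λ := by
  refine csInf_le' (eq_empty_of_forall_notMem fun s hs => ?_)
  exact (le_lift_rank_of_mem_treeDerivIter φ hφ Λ s hs).not_gt
    (hΛ s (treeDerivIter_subset T Λ hs))

variable (r)

theorem IsWellFounded.rank_lt_omega_one [Countable α] (a : α) : IsWellFounded.rank r a < ω₁ := by
  induction a using IsWellFounded.induction r with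
  | _ a ih =>
    rw [IsWellFounded.rank_eq]
    exact Ordinal.iSup_lt_omega_one fun b => (Cardinal.isSuccLimit_omega 1).succ_lt (ih b b.2)

theorem IsWellFounded.exists_lift_rank_lt [Countable α] :
    ∃ Λ : Ordinal.{max v u}, Λ < ω₁ ∧ ∀ a, Ordinal.lift.{u} (IsWellFounded.rank r a) < Λ :=
  ⟨⨆ a, Order.succ (Ordinal.lift.{u} (IsWellFounded.rank r a)),
    Ordinal.iSup_lt_omega_one fun a => (Cardinal.isSuccLimit_omega 1).succ_lt
      (lift_lt_omega_one.2 (IsWellFounded.rank_lt_omega_one r a)),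
    fun a => (Order.lt_succ _).trans_le (Ordinal.le_iSup _ a)⟩

end Rank

section Amalgamation

open Filter Topology

def pairWith {α β : Type*} (x : ℕ → β) (s : List α) : List (β × α) :=
  s.mapIdx fun i a => (x i, a)

variable {α β : Type*} (x : ℕ → β)

@[simp]
theorem length_pairWith (s : List α) : (pairWith x s).length = s.length :=
  List.length_mapIdx

@[simp]
theorem getElem_pairWith (s : List α) (i : ℕ) (hi : i < (pairWith x s).length) :
    (pairWith x s)[i] = (x i, s[i]'(by simpa using hi)) :=
  List.getElem_mapIdx

@[simp]
theorem map_snd_pairWith (s : List α) : (pairWith x s).map Prod.snd = s :=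
  List.ext_getElem (by simp) (by simp)

theorem pairWith_prefix {s t : List α} (h : s <+: t) : pairWith x s <+: pairWith x t := by
  obtain ⟨u, rfl⟩ := h
  simp only [pairWith, List.mapIdx_append]
  exact List.prefix_append _ _

variable (F : (ℕ → ℕ) → List ℕ → Bool)

def amalgamatedTree : Set (List (ℕ × ℕ)) :=
  {p | ∃ x : ℕ → ℕ, (∀ i (hi : i < p.length), p[i].1 = x i) ∧ F x (p.map Prod.snd) = true}

theorem pairWith_mem_amalgamatedTree {x : ℕ → ℕ} {s : List ℕ} (h : F x s = true) :
    pairWith x s ∈ amalgamatedTree F :=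
  ⟨x, by simp, by rwa [map_snd_pairWith]⟩

variable {F}

theorem amalgamatedTree_prefix_mem (htree : ∀ x, IsTreeOn {l | F x l = true}) :
    ∀ p ∈ amalgamatedTree F, ∀ q, q <+: p → q ∈ amalgamatedTree F := by
  rintro p ⟨x, hx, hp⟩ q hq
  exact ⟨x, fun i hi => (hq.getElem hi).symm ▸ hx i _, htree x _ hp _ (hq.map _)⟩

theorem hasInfiniteBranch_of_ofFn_mem_amalgamatedTree (htree : ∀ x, IsTreeOn {l | F x l = true})
    (hF : Continuous F) {g : ℕ → ℕ × ℕ}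
    (hg : ∀ n, List.ofFn (fun i : Fin n => g i) ∈ amalgamatedTree F) :
    HasInfiniteBranch {l | F (fun i => (g i).1) l = true} := by
  choose y hy hFy using hg
  have hlim : Tendsto y atTop (𝓝 fun i => (g i).1) := by
    refine tendsto_pi_nhds.2 fun i => tendsto_const_nhds.congr' ?_
    filter_upwards [eventually_gt_atTop i] with n hn
    have := hy n i (by simpa)
    rwa [List.getElem_ofFn] at this
  refine ⟨fun i => (g i).2, fun m => ?_⟩
  have hclosed : IsClosed {z | F z (List.ofFn fun i : Fin m => (g i).2) = true} :=
    (isClosed_discrete {true}).preimage ((continuous_apply _).comp hF)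
  refine hclosed.mem_of_tendsto hlim ((eventually_ge_atTop m).mono fun n hmn => ?_)
  refine htree _ _ (hFy n) _ (List.prefix_iff_getElem.2 ⟨by simpa using hmn, fun i hi => ?_⟩)
  simp

theorem wellFounded_extendsIn_amalgamatedTree (htree : ∀ x, IsTreeOn {l | F x l = true})
    (hF : Continuous F) (hwf : ∀ x, WellFoundedTree {l | F x l = true}) :
    WellFounded (ExtendsIn (amalgamatedTree F)) :=
  wellFounded_extendsIn (amalgamatedTree_prefix_mem htree) fun _ => by
    by_contra! hg
    exact hwf _ (hasInfiniteBranch_of_ofFn_mem_amalgamatedTree htree hF hg)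

theorem exists_lt_omega_one_forall_treeOrder_le (htree : ∀ x, IsTreeOn {l | F x l = true})
    (hF : Continuous F) (hwf : ∀ x, WellFoundedTree {l | F x l = true}) :
    ∃ Λ : Ordinal.{u}, Λ < ω₁ ∧ ∀ x, treeOrder {l | F x l = true} ≤ Λ := by
  have := IsWellFounded.mk (wellFounded_extendsIn_amalgamatedTree htree hF hwf)
  obtain ⟨Λ, hΛ, hrank⟩ := IsWellFounded.exists_lift_rank_lt (ExtendsIn (amalgamatedTree F))
  refine ⟨Λ, hΛ, fun x => treeOrder_le_of_lift_rank_lt (pairWith x) ?_ fun s _ => hrank _⟩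
  rintro s t ⟨ht, hst, hne⟩
  refine ⟨pairWith_mem_amalgamatedTree F ht, pairWith_prefix x hst, fun h => hne ?_⟩
  simpa using congrArg (List.map Prod.snd) h

end Amalgamation

theorem exists_lt_omega_one_forall_treeOrder_le_of_analyticSet
    {𝒜 : Set {T : List ℕ → Bool // IsTreeOn {l | T l = true}}}
    (hWF : ∀ T ∈ 𝒜, WellFoundedTree {l | T.1 l = true}) (hA : AnalyticSet 𝒜) :
    ∃ Λ : Ordinal.{u}, Λ < ω₁ ∧ ∀ T ∈ 𝒜, treeOrder {l | T.1 l = true} ≤ Λ := by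
  rw [AnalyticSet] at hA
  rcases hA with rfl | ⟨f, hf, rfl⟩
  · exact ⟨0, Ordinal.omega_pos 1, by simp⟩
  · obtain ⟨Λ, hΛ, hle⟩ := exists_lt_omega_one_forall_treeOrder_le (fun x => (f x).2)
      (continuous_subtype_val.comp hf) (fun x => hWF _ ⟨x, rfl⟩)
    exact ⟨Λ, hΛ, by rintro _ ⟨x, rfl⟩; exact hle x⟩

theorem stmt3 (𝒜 : Set {T : List ℕ → Bool // IsTreeOn {l | T l = true}})
    (hWF : ∀ T ∈ 𝒜, WellFoundedTree {l | T.1 l = true})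
    (hA : MeasureTheory.AnalyticSet 𝒜) :
    (⨆ T : 𝒜, treeOrder {l | T.1.1 l = true}) < (Cardinal.aleph 1).ord := by
  obtain ⟨Λ, hΛ, hle⟩ := exists_lt_omega_one_forall_treeOrder_le_of_analyticSet hWF hA
  rw [Cardinal.ord_aleph]
  exact (ciSup_le' fun T : 𝒜 => hle T.1 T.2).trans_lt hΛ

end Theorems
end

section
/- Let X be a Banach space in which every bounded operator has the form λI + S with S strictly singular ('few operators'). If T : X → X is a bounded operator such that for every ε > 0 there exists an infinite-dimensional closed subspace Z of X with ‖T|_Z‖ < ε, then T is strictly singular. -/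
open Ordinal Set

section StrictlySingular

variable {X Y : Type*} [NormedAddCommGroup X] [NormedSpace ℝ X]
  [NormedAddCommGroup Y] [NormedSpace ℝ Y]

theorem StrictlySingular.exists_ne_zero_norm_apply_lt {S : X →L[ℝ] Y}
    (hS : StrictlySingular S) {Z : Submodule ℝ X} (hZ : IsClosed (Z : Set X))
    (hZ_inf : ¬ FiniteDimensional ℝ Z) {ε : ℝ} (hε : 0 < ε) :
    ∃ z ∈ Z, z ≠ 0 ∧ ‖S z‖ < ε * ‖z‖ := by
  have hS_not_below := hS Z hZ hZ_inf
  push Not at hS_not_below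
  obtain ⟨z, hzZ, hz⟩ := hS_not_below ε hε
  refine ⟨z, hzZ, ?_, hz⟩
  rintro rfl
  simp at hz

/-- On a subspace where both `lam • I + S` and `S` have norm below `|lam| / 2`, the identity
would have norm below `|lam|`. -/
theorem eq_zero_of_forall_restrictNormLt_smul_id_add {lam : ℝ} {S : X →L[ℝ] X}
    (hS : StrictlySingular S)
    (h : ∀ ε > (0:ℝ), ∃ Z : Submodule ℝ X, IsClosed (Z : Set X) ∧
      ¬ FiniteDimensional ℝ Z ∧ RestrictNormLt (lam • ContinuousLinearMap.id ℝ X + S) Z ε) :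
    lam = 0 := by
  by_contra hlam
  have hε : 0 < |lam| / 2 := by positivity
  obtain ⟨Z, hZ, hZ_inf, c, -, hc, hT⟩ := h (|lam| / 2) hε
  obtain ⟨z, hzZ, hz0, hSz⟩ := hS.exists_ne_zero_norm_apply_lt hZ hZ_inf hε
  have hTz : ‖lam • z + S z‖ ≤ c * ‖z‖ := by simpa using hT z hzZ
  have hz_pos : 0 < ‖z‖ := norm_pos_iff.mpr hz0
  have : |lam| * ‖z‖ < |lam| * ‖z‖ :=
    calc |lam| * ‖z‖ = ‖(lam • z + S z) - S z‖ := by simp [norm_smul]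
      _ ≤ ‖lam • z + S z‖ + ‖S z‖ := norm_sub_le _ _
      _ < c * ‖z‖ + |lam| / 2 * ‖z‖ := by linarith
      _ < |lam| * ‖z‖ := by nlinarith
  exact this.false

end StrictlySingular

section Theorems

open MeasureTheory TopologicalSpace

theorem stmt7 {X : Type*} [NormedAddCommGroup X] [NormedSpace ℝ X]
    (hX : FewOperators X) (T : X →L[ℝ] X)
    (h : ∀ ε > (0:ℝ), ∃ Z : Submodule ℝ X, IsClosed (Z : Set X) ∧
      ¬ FiniteDimensional ℝ Z ∧ RestrictNormLt T Z ε) :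
    StrictlySingular T := by
  obtain ⟨lam, S, hS, rfl⟩ := hX T
  obtain rfl := eq_zero_of_forall_restrictNormLt_smul_id_add hS h
  simpa using hS

end Theorems
end

section
/- Let X and Y be separable Banach spaces. The set of strictly singular operators of norm at most 1 is a coanalytic subset of the unit ball of L(X,Y) equipped with the strong operator topology. -/
open Ordinal Set

/-!
Evaluation along a dense sequence `u` of `X` embeds the operator ball, with the strong operator
topology, as a closed subset of `ℕ → Y`: the norm bound makes the operators equicontinuous, so
pointwise convergence on `range u` controls convergence everywhere, and pointwise limits of
operators in the ball stay in the ball. Hence the ball is Polish.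

A closed subspace is infinite-dimensional iff it contains a bounded sequence whose terms are
pairwise at distance at least `1` (Riesz's lemma one way, compactness of balls in finite dimension
the other). So `T` is not strictly singular iff for some `n` there is such a sequence `x` with
`‖v‖ ≤ (n + 1) ‖T v‖` on the span of `x`. For fixed `n` these conditions on `(T, x)` are closed, and
the complement of the strictly singular operators is a countable union of projections of closed
subsets of a Polish space.
-/

open Filter Topology TopologicalSpace

theorem cauchySeq_apply_of_equicontinuousAt_of_denseRange {ι α β : Type*}
    [PseudoMetricSpace α] [PseudoMetricSpace β] {F : ℕ → α → β} {x : α}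
    (hF : EquicontinuousAt F x) {u : ι → α} (hu : DenseRange u)
    (h : ∀ i, CauchySeq fun k => F k (u i)) : CauchySeq fun k => F k x := by
  rw [Metric.cauchySeq_iff]
  intro ε hε
  obtain ⟨δ, hδ, hFδ⟩ := Metric.equicontinuousAt_iff.1 hF (ε / 3) (by positivity)
  obtain ⟨i, hi⟩ := hu.exists_dist_lt x hδ
  obtain ⟨N, hN⟩ := Metric.cauchySeq_iff.1 (h i) (ε / 3) (by positivity)
  refine ⟨N, fun m hm n hn => ?_⟩
  calc dist (F m x) (F n x)
      ≤ dist (F m x) (F m (u i)) + dist (F m (u i)) (F n (u i)) + dist (F n (u i)) (F n x) :=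
        dist_triangle4 _ _ _ _
    _ < ε / 3 + ε / 3 + ε / 3 := by
        gcongr
        · exact hFδ _ (by rwa [dist_comm]) m
        · exact hN m hm n hn
        · rw [dist_comm]; exact hFδ _ (by rwa [dist_comm]) n
    _ = ε := by ring

theorem Submodule.not_finiteDimensional_of_separated {E : Type*} [NormedAddCommGroup E]
    [NormedSpace ℝ E] {Z : Submodule ℝ E} {x : ℕ → E} {R ε : ℝ} (hε : 0 < ε)
    (hxZ : ∀ n, x n ∈ Z) (hR : ∀ n, ‖x n‖ ≤ R) (hsep : Pairwise fun m n => ε ≤ ‖x m - x n‖) :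
    ¬ FiniteDimensional ℝ Z := by
  intro _
  let z : ℕ → Z := fun n => ⟨x n, hxZ n⟩
  obtain ⟨a, -, φ, hφ, hlim⟩ :=
    (isCompact_closedBall (0 : Z) R).tendsto_subseq (x := z) fun n => by simpa [z] using hR n
  obtain ⟨N, hN⟩ := Metric.cauchySeq_iff'.1 hlim.cauchySeq ε hε
  have hclose : ‖x (φ (N + 1)) - x (φ N)‖ < ε := by
    simpa [z, dist_eq_norm] using hN (N + 1) N.le_succ
  exact (hsep (hφ.injective.ne N.succ_ne_self)).not_gt hclose

section SeparatedSeq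

variable {X : Type*} [NormedAddCommGroup X]

/-- The constants `2` and `1` are those for which Riesz's lemma produces such a sequence in any
infinite-dimensional space (`exists_seq_norm_le_one_le_norm_sub'`). -/
def IsBoundedSeparatedSeq (x : ℕ → X) : Prop :=
  (∀ n, ‖x n‖ ≤ 2) ∧ Pairwise fun m n => 1 ≤ ‖x m - x n‖

theorem isClosed_setOf_isBoundedSeparatedSeq :
    IsClosed {x : ℕ → X | IsBoundedSeparatedSeq x} := by
  simp only [IsBoundedSeparatedSeq, Pairwise, ofPred_and, ofPred_forall]
  exact (isClosed_iInter fun n => isClosed_le (continuous_apply n).norm continuous_const).inter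
    (isClosed_iInter fun m => isClosed_iInter fun n => isClosed_iInter fun _ =>
      isClosed_le continuous_const ((continuous_apply m).sub (continuous_apply n)).norm)

end SeparatedSeq

section BoundedBelow

variable {X Y : Type*} [NormedAddCommGroup X] [NormedSpace ℝ X]
  [NormedAddCommGroup Y] [NormedSpace ℝ Y]

theorem exists_isBoundedSeparatedSeq (Z : Submodule ℝ X) (hZ : ¬ FiniteDimensional ℝ Z) :
    ∃ x : ℕ → X, IsBoundedSeparatedSeq x ∧ ∀ n, x n ∈ Z := by
  obtain ⟨z, hz, hsep⟩ := exists_seq_norm_le_one_le_norm_sub' (𝕜 := ℝ) (c := 3 / 2) (R := 2)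
    (by norm_num) (by norm_num) hZ
  refine ⟨fun n => z n, ⟨hz, fun m n hmn => ?_⟩, fun n => (z n).2⟩
  simpa using hsep hmn

theorem not_strictlySingular_iff (T : X →L[ℝ] Y) :
    ¬ StrictlySingular T ↔ ∃ c > 0, ∃ x : ℕ → X, IsBoundedSeparatedSeq x ∧
      ∀ v ∈ Submodule.span ℝ (range x), c * ‖v‖ ≤ ‖T v‖ := by
  constructor
  · intro hT
    obtain ⟨Z, -, hZ, c, hc, hbd⟩ : ∃ Z : Submodule ℝ X, IsClosed (Z : Set X) ∧
        ¬ FiniteDimensional ℝ Z ∧ ∃ c > 0, ∀ z ∈ Z, c * ‖z‖ ≤ ‖T z‖ := by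
      simpa [StrictlySingular] using hT
    obtain ⟨x, hx, hxZ⟩ := exists_isBoundedSeparatedSeq Z hZ
    have hspan : Submodule.span ℝ (range x) ≤ Z := Submodule.span_le.2 (range_subset_iff.2 hxZ)
    exact ⟨c, hc, x, hx, fun v hv => hbd v (hspan hv)⟩
  · rintro ⟨c, hc, x, ⟨hR, hsep⟩, hbd⟩ hT
    set Z := (Submodule.span ℝ (range x)).topologicalClosure
    have hxZ : ∀ n, x n ∈ Z := fun n =>
      Submodule.le_topologicalClosure _ (Submodule.subset_span (mem_range_self n))
    have hbdZ : (Z : Set X) ⊆ {w | c * ‖w‖ ≤ ‖T w‖} := by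
      rw [Submodule.topologicalClosure_coe]
      exact closure_minimal hbd (isClosed_le (continuous_const.mul continuous_norm)
        T.continuous.norm)
    exact hT Z (Submodule.isClosed_topologicalClosure _)
      (Submodule.not_finiteDimensional_of_separated one_pos hxZ hR hsep) ⟨c, hc, hbdZ⟩

end BoundedBelow

namespace SOTBall

variable {X Y : Type*} [NormedAddCommGroup X] [NormedSpace ℝ X]
  [NormedAddCommGroup Y] [NormedSpace ℝ Y]

theorem lipschitzWith_op (T : SOTBall X Y) : LipschitzWith 1 T.op :=
  T.op.lipschitz.weaken (NNReal.coe_le_coe.1 T.2)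

theorem continuous_coeFn : Continuous fun T : SOTBall X Y => ⇑T.op := continuous_induced_dom

theorem continuous_op_apply (x : X) : Continuous fun T : SOTBall X Y => T.op x :=
  (continuous_apply x).comp continuous_coeFn

theorem continuous_op_apply_prod : Continuous fun p : SOTBall X Y × X => p.1.op p.2 :=
  continuous_prod_of_continuous_lipschitzWith' _ 1 (fun T => T.lipschitzWith_op)
    continuous_op_apply

def evalSeq (u : ℕ → X) (T : SOTBall X Y) : ℕ → Y := fun n => T.op (u n)

variable {u : ℕ → X}

theorem continuous_evalSeq : Continuous (evalSeq u : SOTBall X Y → ℕ → Y) :=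
  continuous_pi fun n => continuous_op_apply (u n)

theorem evalSeq_injective (hu : DenseRange u) :
    Function.Injective (evalSeq u : SOTBall X Y → ℕ → Y) := fun S T hST =>
  Subtype.ext <| DFunLike.coe_injective <|
    hu.equalizer S.op.continuous T.op.continuous (funext fun n => congrFun hST n)

theorem isInducing_evalSeq (hu : DenseRange u) :
    IsInducing (evalSeq u : SOTBall X Y → ℕ → Y) := by
  refine ⟨le_antisymm continuous_evalSeq.le_induced ?_⟩
  let _ : TopologicalSpace (SOTBall X Y) := .induced (evalSeq u) inferInstance
  -- Equicontinuity upgrades continuity of `T ↦ T (u n)` to joint continuity of `(T, x) ↦ T x`.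
  have hjoint : Continuous fun p : SOTBall X Y × X => p.1.op p.2 :=
    continuous_prod_of_dense_continuous_lipschitzWith' _ 1 hu (fun T => T.lipschitzWith_op)
      fun _ ⟨n, hn⟩ => hn ▸
        (continuous_apply n).comp (continuous_induced_dom (f := evalSeq u))
  have hcoe : Continuous fun T : SOTBall X Y => ⇑T.op :=
    continuous_pi fun x => hjoint.comp (continuous_id.prodMk continuous_const)
  exact continuous_iff_le_induced.1 hcoe

theorem isClosed_range_evalSeq [CompleteSpace Y] (hu : DenseRange u) :
    IsClosed (range (evalSeq u : SOTBall X Y → ℕ → Y)) := by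
  refine IsSeqClosed.isClosed fun g g₀ hg hlim => ?_
  choose S hS using hg
  have hcauchy (x : X) : CauchySeq fun k => (S k).op x :=
    cauchySeq_apply_of_equicontinuousAt_of_denseRange
      ((LipschitzWith.uniformEquicontinuous _ 1 fun k => (S k).lipschitzWith_op).equicontinuous x)
      hu fun n => by simpa [← hS, evalSeq] using (tendsto_pi_nhds.1 hlim n).cauchySeq
  choose f hf using fun x => cauchySeq_tendsto_of_complete (hcauchy x)
  obtain ⟨R, hR, rfl⟩ := (ContinuousLinearMap.isClosed_image_coe_closedBall 0 1).mem_of_tendsto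
    (tendsto_pi_nhds.2 hf)
    (Eventually.of_forall fun k => ⟨(S k).op, mem_closedBall_zero_iff.2 (S k).2, rfl⟩)
  refine ⟨⟨R, mem_closedBall_zero_iff.1 hR⟩, funext fun n => tendsto_nhds_unique (hf (u n)) ?_⟩
  simpa [← hS, evalSeq] using tendsto_pi_nhds.1 hlim n

theorem polishSpace [SeparableSpace X] [CompleteSpace Y] [SeparableSpace Y] :
    PolishSpace (SOTBall X Y) := by
  obtain ⟨u, hu⟩ := exists_dense_seq X
  exact (IsClosedEmbedding.mk ⟨isInducing_evalSeq hu, evalSeq_injective hu⟩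
    (isClosed_range_evalSeq hu)).polishSpace

end SOTBall

section Witnesses

variable {X Y : Type*} [NormedAddCommGroup X] [NormedSpace ℝ X]
  [NormedAddCommGroup Y] [NormedSpace ℝ Y]

def boundedBelowWitnesses (c : ℝ) : Set (SOTBall X Y × (ℕ → X)) :=
  {p | IsBoundedSeparatedSeq p.2 ∧ ∀ v ∈ Submodule.span ℝ (range p.2), c * ‖v‖ ≤ ‖p.1.op v‖}

theorem isClosed_boundedBelowWitnesses (c : ℝ) :
    IsClosed (boundedBelowWitnesses c : Set (SOTBall X Y × (ℕ → X))) := by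
  have hspan : {p : SOTBall X Y × (ℕ → X) |
      ∀ v ∈ Submodule.span ℝ (range p.2), c * ‖v‖ ≤ ‖p.1.op v‖} =
      ⋂ a : ℕ →₀ ℝ,
        {p | c * ‖a.sum fun i r => r • p.2 i‖ ≤ ‖p.1.op (a.sum fun i r => r • p.2 i)‖} := by
    ext p
    simp [Finsupp.mem_span_range_iff_exists_finsupp]
  have hsum (a : ℕ →₀ ℝ) :
      Continuous fun p : SOTBall X Y × (ℕ → X) => a.sum fun i r => r • p.2 i :=
    continuous_finsetSum _ fun i _ =>
      continuous_const.smul ((continuous_apply i).comp continuous_snd)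
  rw [boundedBelowWitnesses, ofPred_and, hspan]
  exact (isClosed_setOf_isBoundedSeparatedSeq.preimage continuous_snd).inter <|
    isClosed_iInter fun a => isClosed_le (continuous_const.mul (hsum a).norm)
      (SOTBall.continuous_op_apply_prod.comp (continuous_fst.prodMk (hsum a))).norm

theorem compl_setOf_strictlySingular_eq :
    {T : SOTBall X Y | StrictlySingular T.op}ᶜ =
      ⋃ n : ℕ, Prod.fst ''
        (boundedBelowWitnesses (1 / (n + 1)) : Set (SOTBall X Y × (ℕ → X))) := by
  ext T
  simp only [mem_compl_iff, mem_ofPred_eq, not_strictlySingular_iff, mem_iUnion, mem_image,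
    Prod.exists, exists_and_right, exists_eq_right, boundedBelowWitnesses]
  constructor
  · rintro ⟨c, hc, x, hx, hbd⟩
    obtain ⟨n, hn⟩ := exists_nat_one_div_lt hc
    exact ⟨n, x, hx, fun v hv =>
      (mul_le_mul_of_nonneg_right hn.le (norm_nonneg v)).trans (hbd v hv)⟩
  · rintro ⟨n, x, hx, hbd⟩
    exact ⟨1 / (n + 1), Nat.one_div_pos_of_nat, x, hx, hbd⟩

end Witnesses

section Theorems

open MeasureTheory TopologicalSpace

theorem stmt13 {X Y : Type*} [NormedAddCommGroup X] [NormedSpace ℝ X] [CompleteSpace X]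
    [SeparableSpace X] [NormedAddCommGroup Y] [NormedSpace ℝ Y] [CompleteSpace Y]
    [SeparableSpace Y] :
    MeasureTheory.AnalyticSet ({T : SOTBall X Y | StrictlySingular T.op}ᶜ) := by
  have := SOTBall.polishSpace (X := X) (Y := Y)
  rw [compl_setOf_strictlySingular_eq]
  exact AnalyticSet.iUnion fun n =>
    (isClosed_boundedBelowWitnesses _).analyticSet.image_of_continuous continuous_fst

end Theorems
end

section
/- Let X, Y be separable Banach spaces such that a bounded operator R : X → Y is strictly singular if and only if for every ε > 0 there exists an infinite-dimensional closed subspace Z of X with ‖R|_Z‖ < ε. Then the set of strictly singular operators of norm at most 1 is a Borel subset of the unit ball of L(X,Y) in the strong operator topology. -/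
open Ordinal Set

/-!
Fix a dense sequence `d` in `X` and code an operator `T` of norm at most one by `(T (d n))ₙ`,
a point of the Polish space `ℕ → Y`. The coding is continuous for the strong operator topology,
and its image is closed, because a contraction given on the span of `d` extends to `X`.
A quantifier over infinite-dimensional closed subspaces becomes one over linearly independent
sequences (a `G_δ` condition) by passing to closed linear spans, and for a contraction
`‖T v‖ ≤ r * ‖v‖` holds iff `‖T (d j)‖ ≤ r * ‖v‖ + ‖d j - v‖` for every `j`, a closed condition on
the code. Hence the codes of operators that are arbitrarily small on infinite-dimensional closed
subspaces form an analytic set, the codes of operators bounded below on one form another, and the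
hypothesis makes them disjoint. Lusin's separation theorem gives a Borel set between them, whose
preimage under the coding is the set of strictly singular operators.
-/

open MeasureTheory TopologicalSpace

section BanachSpaces

theorem isGδ_setOf_linearIndependent {𝕜 ι E : Type*} [NontriviallyNormedField 𝕜]
    [CompleteSpace 𝕜] [NormedAddCommGroup E] [NormedSpace 𝕜 E] [Countable ι] :
    IsGδ {z : ι → E | LinearIndependent 𝕜 z} := by
  have h : {z : ι → E | LinearIndependent 𝕜 z} =
      ⋂ s : Finset ι, (fun z : ι → E => z ∘ ((↑) : s → ι)) ⁻¹' {f | LinearIndependent 𝕜 f} := by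
    ext z
    simp only [mem_ofPred_eq, mem_iInter, mem_preimage]
    exact linearIndependent_iff_finset_linearIndependent
  rw [h]
  exact .iInter fun s => (isOpen_setOfPred_linearIndependent.preimage (by fun_prop)).isGδ

theorem exists_linearIndependent_nat_of_not_finiteDimensional {K V : Type*} [DivisionRing K]
    [AddCommGroup V] [Module K V] (h : ¬ FiniteDimensional K V) :
    ∃ z : ℕ → V, LinearIndependent K z := by
  let b := Module.Basis.ofVectorSpace K V
  have : Infinite (Module.Basis.ofVectorSpaceIndex K V) := by
    by_contra hfin
    rw [not_infinite_iff_finite] at hfin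
    exact h (Module.Finite.of_basis b)
  exact ⟨b ∘ Infinite.natEmbedding _,
    b.linearIndependent.comp _ (Infinite.natEmbedding _).injective⟩

@[fun_prop]
theorem Continuous.linearCombination_apply {α ι R M : Type*} [TopologicalSpace α] [Semiring R]
    [AddCommMonoid M] [Module R M] [TopologicalSpace M] [ContinuousAdd M]
    [ContinuousConstSMul R M] {f : α → ι → M} (hf : Continuous f) (c : ι →₀ R) :
    Continuous fun x => Finsupp.linearCombination R (f x) c := by
  simp only [Finsupp.linearCombination_apply, Finsupp.sum]
  fun_prop

variable {E F : Type*} [NormedAddCommGroup E] [NormedSpace ℝ E] [NormedAddCommGroup F]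
  [NormedSpace ℝ F]

theorem exists_closed_subspace_iff_exists_linearIndependent {Q : E → Prop}
    (hQ : IsClosed {v | Q v}) :
    (∃ Z : Submodule ℝ E, IsClosed (Z : Set E) ∧ ¬ FiniteDimensional ℝ Z ∧ ∀ v ∈ Z, Q v) ↔
      ∃ z : ℕ → E, LinearIndependent ℝ z ∧ ∀ c : ℕ →₀ ℝ, Q (Finsupp.linearCombination ℝ z c) := by
  constructor
  · rintro ⟨Z, -, hZ, hQZ⟩
    obtain ⟨z, hz⟩ := exists_linearIndependent_nat_of_not_finiteDimensional hZ
    exact ⟨Z.subtype ∘ z, hz.map' _ Z.ker_subtype, fun c => by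
      rw [← Finsupp.apply_linearCombination]
      exact hQZ _ (Subtype.mem _)⟩
  · rintro ⟨z, hz, hQz⟩
    let W := Submodule.span ℝ (range z)
    refine ⟨W.topologicalClosure, W.isClosed_topologicalClosure, fun hfin => ?_, ?_⟩
    · have : FiniteDimensional ℝ W := Submodule.finiteDimensional_of_le W.le_topologicalClosure
      exact Module.Finite.not_linearIndependent_of_infinite _ (linearIndependent_span hz)
    · have hW : (W : Set E) ⊆ {v | Q v} := by
        intro v hv
        obtain ⟨c, rfl⟩ : v ∈ LinearMap.range (Finsupp.linearCombination ℝ z) := by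
          rwa [Finsupp.range_linearCombination]
        exact hQz c
      intro v hv
      exact closure_minimal hW hQ (by rwa [← W.topologicalClosure_coe])

section DenseSequence

variable {ι : Type*} {T : E →L[ℝ] F} {d : ι → E}

theorem norm_apply_le_norm_apply_add_norm_sub (hT : ‖T‖ ≤ 1) (x y : E) :
    ‖T x‖ ≤ ‖T y‖ + ‖x - y‖ := by
  have := T.le_of_opNorm_le hT (x - y)
  rw [map_sub, one_mul] at this
  linarith [norm_le_norm_add_norm_sub' (T x) (T y)]

theorem norm_apply_le_iff_of_denseRange (hT : ‖T‖ ≤ 1) (hd : DenseRange d) (v : E) (r : ℝ) :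
    ‖T v‖ ≤ r ↔ ∀ j, ‖T (d j)‖ ≤ r + ‖d j - v‖ := by
  refine ⟨fun h j => by linarith [norm_apply_le_norm_apply_add_norm_sub hT (d j) v], fun h => ?_⟩
  simpa using hd.induction_on (p := fun x => ‖T x‖ ≤ r + ‖x - v‖) v
    (isClosed_le (by fun_prop) (by fun_prop)) h

theorem le_norm_apply_iff_of_denseRange (hT : ‖T‖ ≤ 1) (hd : DenseRange d) (v : E) (r : ℝ) :
    r ≤ ‖T v‖ ↔ ∀ j, r ≤ ‖T (d j)‖ + ‖d j - v‖ := by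
  refine ⟨fun h j => ?_, fun h => ?_⟩
  · linarith [norm_apply_le_norm_apply_add_norm_sub hT v (d j), norm_sub_rev v (d j)]
  · simpa using hd.induction_on (p := fun x => r ≤ ‖T x‖ + ‖x - v‖) v
      (isClosed_le (by fun_prop) (by fun_prop)) h

theorem exists_contraction_of_norm_linearCombination_le [CompleteSpace F] {y : ι → F}
    (hd : DenseRange d)
    (h : ∀ c : ι →₀ ℝ, ‖Finsupp.linearCombination ℝ y c‖ ≤ ‖Finsupp.linearCombination ℝ d c‖) :
    ∃ T : E →L[ℝ] F, ‖T‖ ≤ 1 ∧ (fun n => T (d n)) = y := by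
  have hdense : DenseRange (Finsupp.linearCombination ℝ d) :=
    DenseRange.of_comp (g := fun n => Finsupp.single n 1) (by simpa [Function.comp_def] using hd)
  have hbound : ∀ c, ‖Finsupp.linearCombination ℝ y c‖ ≤ 1 * ‖Finsupp.linearCombination ℝ d c‖ :=
    fun c => by rw [one_mul]; exact h c
  refine ⟨(Finsupp.linearCombination ℝ y).extendOfNorm (Finsupp.linearCombination ℝ d),
    LinearMap.opNorm_extendOfNorm_le hdense zero_le_one hbound, funext fun n => ?_⟩
  simpa using LinearMap.extendOfNorm_eq hdense ⟨1, hbound⟩ (Finsupp.single n 1)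

end DenseSequence

theorem IsGδ.analyticSet {α : Type*} [TopologicalSpace α] [PolishSpace α] {s : Set α}
    (hs : IsGδ s) : AnalyticSet s := by
  borelize α
  exact hs.measurableSet.analyticSet

section Codes

def contractionCodes (d : ℕ → E) : Set (ℕ → F) :=
  {y | ∀ c : ℕ →₀ ℝ, ‖Finsupp.linearCombination ℝ y c‖ ≤ ‖Finsupp.linearCombination ℝ d c‖}

def smallOnSubspaceCodes (d : ℕ → E) (r : ℝ) : Set ((ℕ → F) × (ℕ → E)) :=
  {p | p.1 ∈ contractionCodes d ∧ LinearIndependent ℝ p.2 ∧ ∀ (c : ℕ →₀ ℝ) (j : ℕ),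
    ‖p.1 j‖ ≤ r * ‖Finsupp.linearCombination ℝ p.2 c‖ + ‖d j - Finsupp.linearCombination ℝ p.2 c‖}

def boundedBelowOnSubspaceCodes (d : ℕ → E) (r : ℝ) : Set ((ℕ → F) × (ℕ → E)) :=
  {p | p.1 ∈ contractionCodes d ∧ LinearIndependent ℝ p.2 ∧ ∀ (c : ℕ →₀ ℝ) (j : ℕ),
    r * ‖Finsupp.linearCombination ℝ p.2 c‖ ≤ ‖p.1 j‖ + ‖d j - Finsupp.linearCombination ℝ p.2 c‖}

def arbitrarilySmallCodes (d : ℕ → E) : Set (ℕ → F) :=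
  ⋂ m : ℕ, Prod.fst '' smallOnSubspaceCodes d (1 / (m + 1))

def boundedBelowCodes (d : ℕ → E) : Set (ℕ → F) :=
  ⋃ m : ℕ, Prod.fst '' boundedBelowOnSubspaceCodes d (1 / (m + 1))

variable (d : ℕ → E)

theorem isClosed_contractionCodes : IsClosed (contractionCodes (F := F) d) := by
  simp only [contractionCodes, ofPred_forall]
  exact isClosed_iInter fun c => isClosed_le (by fun_prop) continuous_const

theorem isGδ_smallOnSubspaceCodes (r : ℝ) : IsGδ (smallOnSubspaceCodes (F := F) d r) := by
  simp only [smallOnSubspaceCodes, ofPred_and, ofPred_forall]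
  exact ((isClosed_contractionCodes d).preimage continuous_fst).isGδ.inter
    ((isGδ_setOf_linearIndependent.preimage continuous_snd).inter
      (isClosed_iInter fun c => isClosed_iInter fun j =>
        isClosed_le (by fun_prop) (by fun_prop)).isGδ)

theorem isGδ_boundedBelowOnSubspaceCodes (r : ℝ) :
    IsGδ (boundedBelowOnSubspaceCodes (F := F) d r) := by
  simp only [boundedBelowOnSubspaceCodes, ofPred_and, ofPred_forall]
  exact ((isClosed_contractionCodes d).preimage continuous_fst).isGδ.inter
    ((isGδ_setOf_linearIndependent.preimage continuous_snd).inter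
      (isClosed_iInter fun c => isClosed_iInter fun j =>
        isClosed_le (by fun_prop) (by fun_prop)).isGδ)

theorem arbitrarilySmallCodes_subset_contractionCodes :
    arbitrarilySmallCodes (F := F) d ⊆ contractionCodes d := fun _ hy => by
  obtain ⟨p, hp, rfl⟩ := mem_iInter.1 hy 0
  exact hp.1

variable [CompleteSpace E] [SeparableSpace E] [CompleteSpace F] [SeparableSpace F]

theorem analyticSet_arbitrarilySmallCodes : AnalyticSet (arbitrarilySmallCodes (F := F) d) := by
  have := UniformSpace.secondCountable_of_separable E
  have := UniformSpace.secondCountable_of_separable F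
  exact .iInter fun m =>
    (isGδ_smallOnSubspaceCodes d _).analyticSet.image_of_continuous continuous_fst

theorem analyticSet_boundedBelowCodes : AnalyticSet (boundedBelowCodes (F := F) d) := by
  have := UniformSpace.secondCountable_of_separable E
  have := UniformSpace.secondCountable_of_separable F
  exact .iUnion fun m =>
    (isGδ_boundedBelowOnSubspaceCodes d _).analyticSet.image_of_continuous continuous_fst

end Codes

section Characterization

variable {T : E →L[ℝ] F} {d : ℕ → E}

theorem apply_mem_contractionCodes (hT : ‖T‖ ≤ 1) (d : ℕ → E) :
    (fun n => T (d n)) ∈ contractionCodes d := fun c => by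
  rw [show (fun n => T (d n)) = T.toLinearMap ∘ d from rfl,
    ← Finsupp.apply_linearCombination]
  exact (T.le_of_opNorm_le hT _).trans_eq (one_mul _)

theorem apply_mem_image_smallOnSubspaceCodes_iff (hT : ‖T‖ ≤ 1) (hd : DenseRange d) (r : ℝ) :
    (fun n => T (d n)) ∈ Prod.fst '' smallOnSubspaceCodes d r ↔
      ∃ Z : Submodule ℝ E, IsClosed (Z : Set E) ∧ ¬ FiniteDimensional ℝ Z ∧
        ∀ v ∈ Z, ‖T v‖ ≤ r * ‖v‖ := by
  rw [exists_closed_subspace_iff_exists_linearIndependent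
    (isClosed_le (by fun_prop) (by fun_prop))]
  constructor
  · rintro ⟨⟨y, z⟩, ⟨-, hz, h⟩, rfl⟩
    exact ⟨z, hz, fun c => (norm_apply_le_iff_of_denseRange hT hd _ _).2 (h c)⟩
  · rintro ⟨z, hz, h⟩
    exact ⟨(_, z), ⟨apply_mem_contractionCodes hT d, hz,
      fun c => (norm_apply_le_iff_of_denseRange hT hd _ _).1 (h c)⟩, rfl⟩

theorem apply_mem_image_boundedBelowOnSubspaceCodes_iff (hT : ‖T‖ ≤ 1) (hd : DenseRange d)
    (r : ℝ) :
    (fun n => T (d n)) ∈ Prod.fst '' boundedBelowOnSubspaceCodes d r ↔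
      ∃ Z : Submodule ℝ E, IsClosed (Z : Set E) ∧ ¬ FiniteDimensional ℝ Z ∧
        ∀ v ∈ Z, r * ‖v‖ ≤ ‖T v‖ := by
  rw [exists_closed_subspace_iff_exists_linearIndependent
    (isClosed_le (by fun_prop) (by fun_prop))]
  constructor
  · rintro ⟨⟨y, z⟩, ⟨-, hz, h⟩, rfl⟩
    exact ⟨z, hz, fun c => (le_norm_apply_iff_of_denseRange hT hd _ _).2 (h c)⟩
  · rintro ⟨z, hz, h⟩
    exact ⟨(_, z), ⟨apply_mem_contractionCodes hT d, hz,
      fun c => (le_norm_apply_iff_of_denseRange hT hd _ _).1 (h c)⟩, rfl⟩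

theorem apply_mem_arbitrarilySmallCodes_iff (hT : ‖T‖ ≤ 1) (hd : DenseRange d) :
    (fun n => T (d n)) ∈ arbitrarilySmallCodes d ↔ ∀ ε > (0 : ℝ),
      ∃ Z : Submodule ℝ E, IsClosed (Z : Set E) ∧ ¬ FiniteDimensional ℝ Z ∧
        RestrictNormLt T Z ε := by
  simp only [arbitrarilySmallCodes, mem_iInter, apply_mem_image_smallOnSubspaceCodes_iff hT hd]
  constructor
  · intro h ε hε
    obtain ⟨m, hm⟩ := exists_nat_one_div_lt hε
    obtain ⟨Z, hZ, hZfin, hTZ⟩ := h m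
    exact ⟨Z, hZ, hZfin, _, by positivity, hm, hTZ⟩
  · intro h m
    obtain ⟨Z, hZ, hZfin, c, -, hc, hTZ⟩ := h _ Nat.one_div_pos_of_nat
    exact ⟨Z, hZ, hZfin, fun v hv => (hTZ v hv).trans (by gcongr)⟩

theorem apply_mem_boundedBelowCodes_iff (hT : ‖T‖ ≤ 1) (hd : DenseRange d) :
    (fun n => T (d n)) ∈ boundedBelowCodes d ↔ ¬ StrictlySingular T := by
  simp only [boundedBelowCodes, mem_iUnion, apply_mem_image_boundedBelowOnSubspaceCodes_iff hT hd,
    StrictlySingular]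
  push Not
  constructor
  · rintro ⟨m, Z, hZ, hZfin, hTZ⟩
    exact ⟨Z, hZ, hZfin, _, Nat.one_div_pos_of_nat, hTZ⟩
  · rintro ⟨Z, hZ, hZfin, c, hc, hTZ⟩
    obtain ⟨m, hm⟩ := exists_nat_one_div_lt hc
    exact ⟨m, Z, hZ, hZfin, fun v hv => le_trans (by gcongr) (hTZ v hv)⟩

end Characterization

end BanachSpaces

theorem SOTBall.continuous_op_apply_s15 {X Y : Type*} [NormedAddCommGroup X] [NormedSpace ℝ X]
    [NormedAddCommGroup Y] [NormedSpace ℝ Y] (x : X) :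
    Continuous fun T : SOTBall X Y => T.op x :=
  (continuous_apply x).comp continuous_induced_dom

section Theorems

open MeasureTheory TopologicalSpace

theorem stmt15 {X Y : Type*} [NormedAddCommGroup X] [NormedSpace ℝ X] [CompleteSpace X]
    [SeparableSpace X] [NormedAddCommGroup Y] [NormedSpace ℝ Y] [CompleteSpace Y]
    [SeparableSpace Y]
    (hchar : ∀ R : X →L[ℝ] Y, StrictlySingular R ↔ ∀ ε > (0:ℝ),
      ∃ Z : Submodule ℝ X, IsClosed (Z : Set X) ∧ ¬ FiniteDimensional ℝ Z ∧
        RestrictNormLt R Z ε) :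
    MeasurableSet[borel (SOTBall X Y)] {T : SOTBall X Y | StrictlySingular T.op} := by
  obtain ⟨d, hd⟩ := exists_dense_seq X
  have hss (T : X →L[ℝ] Y) (hT : ‖T‖ ≤ 1) :
      StrictlySingular T ↔ (fun n => T (d n)) ∈ arbitrarilySmallCodes d :=
    (hchar T).trans (apply_mem_arbitrarilySmallCodes_iff hT hd).symm
  have hdisj : Disjoint (arbitrarilySmallCodes d) (boundedBelowCodes (F := Y) d) := by
    refine disjoint_left.2 fun y hsmall hbelow => ?_
    obtain ⟨T, hT, rfl⟩ := exists_contraction_of_norm_linearCombination_le hd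
      (arbitrarilySmallCodes_subset_contractionCodes d hsmall)
    exact (apply_mem_boundedBelowCodes_iff hT hd).1 hbelow ((hss T hT).2 hsmall)
  borelize (ℕ → Y)
  obtain ⟨u, hsmall_u, hbelow_u, hu⟩ := (analyticSet_arbitrarilySmallCodes d).measurablySeparable
    (analyticSet_boundedBelowCodes d) hdisj
  have hpre : {T : SOTBall X Y | StrictlySingular T.op} = (fun T n => T.op (d n)) ⁻¹' u := by
    ext T
    refine ⟨fun h => hsmall_u ((hss _ T.2).1 h), fun h => by_contra fun h' => ?_⟩
    exact disjoint_left.1 hbelow_u ((apply_mem_boundedBelowCodes_iff T.2 hd).2 h') h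
  rw [hpre]
  exact (continuous_pi fun n => SOTBall.continuous_op_apply_s15 (d n)).borel_measurable hu

end Theorems
end
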